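/- Let {s_a, p_A} be a representation of a weakly left-resolving labelled space (E,π,𝒞) in a C*-algebra B. Then the linear span of the set {s_α p_A s_β* : α, β ∈ ℒ(E,π), A ∈ 𝒞, A ⊆ r(α) ∩ r(β)} ∪ {s_α p_A : α ∈ ℒ(E,π), A ∈ 𝒞, A ⊆ r(α)} ∪ {p_A s_β* : β ∈ ℒ(E,π), A ∈ 𝒞, A ⊆ r(β)} ∪ {p_A : A ∈ 𝒞} is a *-subalgebra of B containing every s_a and every p_A; consequently every finite product of elements of {s_a} ∪ {s_a*} ∪ {p_A} lies in this span, and its closure is the C*-subalgebra of B generated by {s_a, p_A}. -/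

import Mathlib

/-- A labelled graph: a directed graph with vertex type `V`, edge type `E`,
source and range maps, together with a labelling of the edges by the alphabet `A`. -/
structure LabelledGraph (V : Type*) (E : Type*) (A : Type*) where
  src : E → V
  rng : E → V
  lbl : E → A

namespace LabelledGraph

variable {V E A : Type*}

/-- A path is a nonempty list of edges such that the range of each edge is the
source of the next one. -/
def IsPath (G : LabelledGraph V E A) (l : List E) : Prop :=
  l ≠ [] ∧ l.Chain' (fun e f => G.rng e = G.src f)

/-- The language `ℒ(E,π)`: all (nonempty) words over `A` represented by some path. -/
def language (G : LabelledGraph V E A) : Set (List A) :=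
  { α | ∃ l, G.IsPath l ∧ l.map G.lbl = α }

/-- `s(α)`: sources of paths representing the word `α`. -/
def srcSet (G : LabelledGraph V E A) (α : List A) : Set V :=
  { v | ∃ l, ∃ h : G.IsPath l, l.map G.lbl = α ∧ G.src (l.head h.1) = v }

/-- `r(α)`: ranges of paths representing the word `α`. -/
def rngSet (G : LabelledGraph V E A) (α : List A) : Set V :=
  { v | ∃ l, ∃ h : G.IsPath l, l.map G.lbl = α ∧ G.rng (l.getLast h.1) = v }

/-- `r(S,α)`: the relative range of the word `α` with respect to the set `S` of vertices. -/
def relRng (G : LabelledGraph V E A) (S : Set V) (α : List A) : Set V :=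
  { v | ∃ l, ∃ h : G.IsPath l,
      l.map G.lbl = α ∧ G.src (l.head h.1) ∈ S ∧ G.rng (l.getLast h.1) = v }

/-- A labelled graph is left-resolving if the labelling is injective on the set
of incoming edges of each vertex. -/
def LeftResolving (G : LabelledGraph V E A) : Prop :=
  ∀ v : V, Set.InjOn G.lbl { e | G.rng e = v }

/-- A sink is a vertex emitting no edges. -/
def IsSink (G : LabelledGraph V E A) (v : V) : Prop := ∀ e : E, G.src e ≠ v

/-- A source is a vertex receiving no edges. -/
def IsSource (G : LabelledGraph V E A) (v : V) : Prop := ∀ e : E, G.rng e ≠ v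

/-- `L¹_S`: the letters `a` (labelled paths of length one) with `S ∩ s(a) ≠ ∅`. -/
def L1 (G : LabelledGraph V E A) (S : Set V) : Set A :=
  { a | (S ∩ G.srcSet [a]).Nonempty }

/-- `Lⁿ_S`: the words of length `n` whose source set meets `S`. -/
def Ln (G : LabelledGraph V E A) (S : Set V) (n : ℕ) : Set (List A) :=
  { α | α.length = n ∧ (S ∩ G.srcSet α).Nonempty }

/-- A collection `C` of subsets of vertices is accommodating for `G` if it contains all
ranges `r(α)`, is closed under relative ranges, and under finite intersections and unions. -/
structure Accommodating (G : LabelledGraph V E A) (C : Set (Set V)) : Prop where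
  rng_mem : ∀ α ∈ G.language, G.rngSet α ∈ C
  relRng_mem : ∀ S ∈ C, ∀ α ∈ G.language, G.relRng S α ∈ C
  inter_mem : ∀ S ∈ C, ∀ T ∈ C, S ∩ T ∈ C
  union_mem : ∀ S ∈ C, ∀ T ∈ C, S ∪ T ∈ C

/-- The labelled space `(E,π,C)` is weakly left-resolving. -/
def WeaklyLeftResolving (G : LabelledGraph V E A) (C : Set (Set V)) : Prop :=
  ∀ S ∈ C, ∀ T ∈ C, ∀ α ∈ G.language,
    G.relRng S α ∩ G.relRng T α = G.relRng (S ∩ T) α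

/-- The labelled space `(E,π,C)` is set-finite. -/
def SetFinite (G : LabelledGraph V E A) (C : Set (Set V)) : Prop :=
  ∀ S ∈ C, (G.L1 S).Finite

/-- The collection `ℰ`. -/
def calE (G : LabelledGraph V E A) : Set (Set V) :=
  { S | ∃ v, (G.IsSource v ∨ G.IsSink v) ∧ S = {v} } ∪
    (G.rngSet '' G.language) ∪ (G.srcSet '' G.language)

/-- The collection `ℰ₋`. -/
def calEminus (G : LabelledGraph V E A) : Set (Set V) :=
  { S | ∃ v, G.IsSink v ∧ S = {v} } ∪ (G.rngSet '' G.language)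

/-- `ℰ⁰`: the smallest accommodating collection containing `ℰ`. -/
def E0 (G : LabelledGraph V E A) : Set (Set V) :=
  ⋂₀ { C | G.calE ⊆ C ∧ G.Accommodating C }

/-- `ℰ⁰₋`: the smallest accommodating collection containing `ℰ₋`. -/
def E0minus (G : LabelledGraph V E A) : Set (Set V) :=
  ⋂₀ { C | G.calEminus ⊆ C ∧ G.Accommodating C }

/-- The dual labelled graph `(Ê,π̂)`: vertices are edges of `G`, edges are paths of
length two, labelled by the corresponding words of length two. -/
def dual (G : LabelledGraph V E A) :
    LabelledGraph E { ef : E × E // G.rng ef.1 = G.src ef.2 } (List A) where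
  src ef := ef.1.1
  rng ef := ef.1.2
  lbl ef := [G.lbl ef.1.1, G.lbl ef.1.2]

end LabelledGraph

/-- The product `s_{a₁} ⋯ s_{aₙ}` associated to a word `a₁⋯aₙ` (with junk value `0` on
the empty word). -/
def sWord {A B : Type*} [Mul B] [Zero B] (s : A → B) : List A → B
  | [] => 0
  | [a] => s a
  | a :: b :: l => s a * sWord s (b :: l)

namespace LabelledGraph

/-- A representation of the labelled space `(G, C)` in a C*-algebra `B`: a family of
projections `p S` for `S ∈ C` and partial isometries `s a` for `a ∈ ℒ¹` satisfying the
relations (i)-(iv). -/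
structure IsRepresentation {V E A : Type*} (G : LabelledGraph V E A) (C : Set (Set V))
    {B : Type*} [NonUnitalRing B] [StarRing B] (p : Set V → B) (s : A → B) : Prop where
  p_star : ∀ S ∈ C, star (p S) = p S
  p_idem : ∀ S ∈ C, p S * p S = p S
  s_partialIsometry : ∀ a, [a] ∈ G.language → s a * star (s a) * s a = s a
  p_empty : p ∅ = 0
  p_inter : ∀ S ∈ C, ∀ T ∈ C, p S * p T = p (S ∩ T)
  p_union : ∀ S ∈ C, ∀ T ∈ C, p (S ∪ T) = p S + p T - p (S ∩ T)
  p_mul_s : ∀ S ∈ C, ∀ a, [a] ∈ G.language → p S * s a = s a * p (G.relRng S [a])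
  star_s_mul_s : ∀ a, [a] ∈ G.language → star (s a) * s a = p (G.rngSet [a])
  s_orth : ∀ a b, [a] ∈ G.language → [b] ∈ G.language → a ≠ b → star (s a) * s b = 0
  cuntz_krieger : ∀ S ∈ C, ∀ hfin : (G.L1 S).Finite, (G.L1 S).Nonempty →
    p S = ∑ a ∈ hfin.toFinset, s a * p (G.relRng S [a]) * star (s a)

end LabelledGraph

/-- The C*-subalgebra of `B` generated by a set, as a subset of `B`: the closure of the
non-unital star subalgebra generated by the set. -/
def genCStar (B : Type*) [NonUnitalCStarAlgebra B] (gens : Set B) : Set B :=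
  closure (NonUnitalStarAlgebra.adjoin ℂ gens : Set B)

/-- An action of the circle group `𝕋` by *-automorphisms on `B`, strongly continuous. -/
structure CircleAction (B : Type*) [NonUnitalCStarAlgebra B] where
  act : Circle → B → B
  act_one : act 1 = id
  act_mul : ∀ z w, act (z * w) = act z ∘ act w
  act_bijective : ∀ z, Function.Bijective (act z)
  map_add : ∀ z x y, act z (x + y) = act z x + act z y
  map_mul : ∀ z x y, act z (x * y) = act z x * act z y
  map_smul : ∀ z (c : ℂ) x, act z (c • x) = c • act z x
  map_star : ∀ z x, act z (star x) = star (act z x)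
  continuous : ∀ x, Continuous fun z => act z x

/-- A gauge action for a representation `{s_a, p_A}`: the circle action fixes the
projections and scales the partial isometries. -/
def IsGaugeAction {V E A : Type*} (G : LabelledGraph V E A) (C : Set (Set V))
    {B : Type*} [NonUnitalCStarAlgebra B] (p : Set V → B) (s : A → B)
    (γ : CircleAction B) : Prop :=
  (∀ z a, [a] ∈ G.language → γ.act z (s a) = (z : ℂ) • s a) ∧
  (∀ z, ∀ S ∈ C, γ.act z (p S) = p S)

/-- A Cuntz–Krieger family for the directed graph underlying `G`. -/
structure IsCKFamily {V E A : Type*} (G : LabelledGraph V E A)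
    {B : Type*} [NonUnitalRing B] [StarRing B] (p : V → B) (s : E → B) : Prop where
  p_star : ∀ v, star (p v) = p v
  p_idem : ∀ v, p v * p v = p v
  p_orth : ∀ v w, v ≠ w → p v * p w = 0
  star_s_mul_s : ∀ e, star (s e) * s e = p (G.rng e)
  s_orth : ∀ e f, e ≠ f → star (s e) * s f = 0
  cuntz_krieger : ∀ v, (∃ e, G.src e = v) → ∀ hfin : {e | G.src e = v}.Finite,
    p v = ∑ e ∈ hfin.toFinset, s e * star (s e)


section RepAux

namespace LabelledGraph

variable {V E A : Type*} {G : LabelledGraph V E A}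

lemma lang_ne_nil {α : List A} (h : α ∈ G.language) : α ≠ [] := by
  obtain ⟨l, ⟨hl, _⟩, rfl⟩ := h
  simpa using hl

lemma prefix_lang {α β : List A} (h : α ++ β ∈ G.language) (hα : α ≠ []) :
    α ∈ G.language := by
  obtain ⟨l, ⟨hl, hc⟩, hm⟩ := h
  have hm1 : (l.take α.length).map G.lbl = α := by
    rw [List.map_take, hm, List.take_left]
  exact ⟨l.take α.length, ⟨fun h0 => hα (by rw [← hm1, h0]; rfl), hc.take _⟩, hm1⟩

lemma suffix_lang {α β : List A} (h : α ++ β ∈ G.language) (hβ : β ≠ []) :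
    β ∈ G.language := by
  obtain ⟨l, ⟨hl, hc⟩, hm⟩ := h
  have hm2 : (l.drop α.length).map G.lbl = β := by
    rw [List.map_drop, hm, List.drop_left]
  exact ⟨l.drop α.length, ⟨fun h0 => hβ (by rw [← hm2, h0]; rfl), hc.drop _⟩, hm2⟩

lemma letter_lang {α : List A} (h : α ∈ G.language) {a : A} (ha : a ∈ α) :
    [a] ∈ G.language := by
  obtain ⟨u, t, rfl⟩ := List.append_of_mem ha
  have h1 : ([a] ++ t) ∈ G.language := by
    simpa using suffix_lang h (show a :: t ≠ [] by simp)
  exact prefix_lang h1 (by simp)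

lemma relRng_mono {S T : Set V} (h : S ⊆ T) (α : List A) :
    G.relRng S α ⊆ G.relRng T α := by
  rintro v ⟨l, hp, h1, h2, h3⟩; exact ⟨l, hp, h1, h h2, h3⟩

lemma relRng_subset_rngSet (S : Set V) (α : List A) :
    G.relRng S α ⊆ G.rngSet α := by
  rintro v ⟨l, hp, h1, _, h3⟩; exact ⟨l, hp, h1, h3⟩

lemma rngSet_of_not_lang {α : List A} (h : α ∉ G.language) : G.rngSet α = ∅ := by
  ext v
  simp only [Set.mem_empty_iff_false, iff_false]
  rintro ⟨l, hp, h1, _⟩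
  exact h ⟨l, hp, h1⟩

lemma rngSet_eq_relRng_univ (α : List A) : G.rngSet α = G.relRng Set.univ α := by
  ext v
  constructor
  · rintro ⟨l, hp, h1, h3⟩; exact ⟨l, hp, h1, trivial, h3⟩
  · rintro ⟨l, hp, h1, _, h3⟩; exact ⟨l, hp, h1, h3⟩

lemma relRng_append (S : Set V) {α β : List A} (hα : α ≠ []) (hβ : β ≠ []) :
    G.relRng S (α ++ β) = G.relRng (G.relRng S α) β := by
  ext v
  constructor
  · rintro ⟨l, ⟨hne, hch⟩, hm, hs, hr⟩
    have hl : l = l.take α.length ++ l.drop α.length := (List.take_append_drop _ _).symm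
    have hm1 : (l.take α.length).map G.lbl = α := by
      rw [List.map_take, hm, List.take_left]
    have hm2 : (l.drop α.length).map G.lbl = β := by
      rw [List.map_drop, hm, List.drop_left]
    have h1ne : l.take α.length ≠ [] := fun h0 => hα (by rw [← hm1, h0]; rfl)
    have h2ne : l.drop α.length ≠ [] := fun h0 => hβ (by rw [← hm2, h0]; rfl)
    rw [hl] at hch
    obtain ⟨hc1, hc2, hlink⟩ := List.isChain_append.mp hch
    have hhead : l.head hne = (l.take α.length).head h1ne := by
      have e1 : l.head? = some (l.head hne) := List.head?_eq_head hne
      have e2 : l.head? = some ((l.take α.length).head h1ne) := by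
        conv_lhs => rw [hl]
        rw [List.head?_append, List.head?_eq_head h1ne]
        rfl
      exact Option.some_injective _ (e1.symm.trans e2)
    have hlast : l.getLast hne = (l.drop α.length).getLast h2ne := by
      have e1 : l.getLast? = some (l.getLast hne) := List.getLast?_eq_getLast hne
      have e2 : l.getLast? = some ((l.drop α.length).getLast h2ne) := by
        conv_lhs => rw [hl]
        rw [List.getLast?_append, List.getLast?_eq_getLast h2ne]
        rfl
      exact Option.some_injective _ (e1.symm.trans e2)
    refine ⟨l.drop α.length, ⟨h2ne, hc2⟩, hm2,
      ⟨l.take α.length, ⟨h1ne, hc1⟩, hm1, by rw [← hhead]; exact hs, ?_⟩,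
      by rw [← hlast]; exact hr⟩
    exact hlink _ (List.getLast?_eq_getLast h1ne ▸ rfl) _ (List.head?_eq_head h2ne ▸ rfl)
  · rintro ⟨l₂, ⟨h2ne, hc2⟩, hm2, ⟨l₁, ⟨h1ne, hc1⟩, hm1, hs1, hlink⟩, hr2⟩
    have hne : l₁ ++ l₂ ≠ [] := by simp [h1ne]
    refine ⟨l₁ ++ l₂, ⟨hne, ?_⟩, by rw [List.map_append, hm1, hm2], ?_, ?_⟩
    · refine List.isChain_append.mpr ⟨hc1, hc2, ?_⟩
      intro x hx y hy
      rw [List.getLast?_eq_getLast h1ne] at hx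
      rw [List.head?_eq_head h2ne] at hy
      obtain rfl := Option.some_injective _ hx
      obtain rfl := Option.some_injective _ hy
      exact hlink
    · rw [List.head_append_of_ne_nil h1ne]; exact hs1
    · rw [List.getLast_append_of_right_ne_nil _ _ h2ne]; exact hr2

lemma rngSet_append {α β : List A} (hα : α ≠ []) (hβ : β ≠ []) :
    G.rngSet (α ++ β) = G.relRng (G.rngSet α) β := by
  rw [rngSet_eq_relRng_univ, relRng_append _ hα hβ, ← rngSet_eq_relRng_univ]

end LabelledGraph

lemma sWord_cons' {A B : Type*} [Mul B] [Zero B] (s : A → B) (a : A) {l : List A}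
    (h : l ≠ []) : sWord s (a :: l) = s a * sWord s l := by
  cases l with
  | nil => exact absurd rfl h
  | cons b t => rfl

lemma sWord_append' {A B : Type*} [Semigroup B] [Zero B] (s : A → B) {μ γ : List A}
    (hμ : μ ≠ []) (hγ : γ ≠ []) : sWord s (μ ++ γ) = sWord s μ * sWord s γ := by
  induction μ with
  | nil => exact absurd rfl hμ
  | cons a t ih =>
    cases t with
    | nil => exact sWord_cons' s a hγ
    | cons b u =>
      rw [List.cons_append, sWord_cons' s a (by simp), ih (by simp),
        sWord_cons' s a (by simp), mul_assoc]

namespace RepAux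

open LabelledGraph

variable {V E A B : Type*} [NonUnitalRing B] [StarRing B]
  {G : LabelledGraph V E A} {C : Set (Set V)} {p : Set V → B} {s : A → B}

/-- Multiply on the left by `sWord s μ`, or do nothing if `μ = []`. -/
def LMul (s : A → B) : List A → B → B
  | [], b => b
  | μ, b => sWord s μ * b

/-- Multiply on the right by `star (sWord s ν)`, or do nothing if `ν = []`. -/
def RMul (s : A → B) : List A → B → B
  | [], b => b
  | ν, b => b * star (sWord s ν)

lemma LMul_of_ne {μ : List A} (h : μ ≠ []) (b : B) :
    LMul s μ b = sWord s μ * b := by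
  cases μ with
  | nil => exact absurd rfl h
  | cons a t => rfl

lemma RMul_of_ne {ν : List A} (h : ν ≠ []) (b : B) :
    RMul s ν b = b * star (sWord s ν) := by
  cases ν with
  | nil => exact absurd rfl h
  | cons a t => rfl

/-- The normal-form element `s_μ p_S s_ν*`. -/
def Melt (p : Set V → B) (s : A → B) (μ : List A) (S : Set V) (ν : List A) : B :=
  LMul s μ (RMul s ν (p S))

/-- The admissibility condition on the triple `(μ, S, ν)`. -/
def Q (G : LabelledGraph V E A) (C : Set (Set V)) (μ : List A) (S : Set V)
    (ν : List A) : Prop :=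
  S ∈ C ∧ (μ ≠ [] → μ ∈ G.language ∧ S ⊆ G.rngSet μ) ∧
    (ν ≠ [] → ν ∈ G.language ∧ S ⊆ G.rngSet ν)

/-- The generating set of the linear span. -/
def genU (G : LabelledGraph V E A) (C : Set (Set V)) (p : Set V → B) (s : A → B) :
    Set B :=
  { x | ∃ α ∈ G.language, ∃ β ∈ G.language, ∃ S ∈ C,
      S ⊆ G.rngSet α ∩ G.rngSet β ∧ x = sWord s α * p S * star (sWord s β) } ∪
   { x | ∃ α ∈ G.language, ∃ S ∈ C,
      S ⊆ G.rngSet α ∧ x = sWord s α * p S } ∪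
   { x | ∃ β ∈ G.language, ∃ S ∈ C,
      S ⊆ G.rngSet β ∧ x = p S * star (sWord s β) } ∪
   { x | ∃ S ∈ C, x = p S }

lemma LMul_zero (μ : List A) : LMul s μ (0 : B) = 0 := by
  cases μ with
  | nil => rfl
  | cons a t => rw [LMul_of_ne (by simp), mul_zero]

lemma RMul_zero (ν : List A) : RMul s ν (0 : B) = 0 := by
  cases ν with
  | nil => rfl
  | cons a t => rw [RMul_of_ne (by simp), zero_mul]

lemma LMul_RMul (μ ν : List A) (x : B) :
    LMul s μ (RMul s ν x) = RMul s ν (LMul s μ x) := by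
  rcases eq_or_ne μ [] with rfl | hμ
  · rfl
  · rcases eq_or_ne ν [] with rfl | hν
    · rfl
    · rw [RMul_of_ne hν, LMul_of_ne hμ, LMul_of_ne hμ, RMul_of_ne hν, mul_assoc]

lemma LMul_mul_RMul (μ δ : List A) (a b : B) :
    LMul s μ a * RMul s δ b = LMul s μ (RMul s δ (a * b)) := by
  rcases eq_or_ne μ [] with rfl | hμ
  · rcases eq_or_ne δ [] with rfl | hδ
    · rfl
    · rw [RMul_of_ne hδ, RMul_of_ne hδ, mul_assoc]
      rfl
  · rcases eq_or_ne δ [] with rfl | hδ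
    · rw [LMul_of_ne hμ, LMul_of_ne hμ, mul_assoc]
      rfl
    · rw [LMul_of_ne hμ, RMul_of_ne hδ, LMul_of_ne hμ, RMul_of_ne hδ]
      simp only [mul_assoc]

lemma mem_genU_of_Q {μ : List A} {S : Set V} {ν : List A} (h : Q G C μ S ν) :
    Melt p s μ S ν ∈ genU G C p s := by
  obtain ⟨hS, hμ, hν⟩ := h
  simp only [genU, Set.mem_union, Set.mem_setOf_eq]
  rcases eq_or_ne μ [] with rfl | hμne
  · rcases eq_or_ne ν [] with rfl | hνne
    · exact Or.inr ⟨S, hS, rfl⟩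
    · exact Or.inl (Or.inr ⟨ν, (hν hνne).1, S, hS, (hν hνne).2,
        by show RMul s ν (p S) = p S * star (sWord s ν); exact RMul_of_ne hνne (p S)⟩)
  · rcases eq_or_ne ν [] with rfl | hνne
    · exact Or.inl (Or.inl (Or.inr ⟨μ, (hμ hμne).1, S, hS, (hμ hμne).2,
        by unfold Melt; rw [LMul_of_ne hμne]; exact congrArg _ rfl⟩))
    · refine Or.inl (Or.inl (Or.inl ⟨μ, (hμ hμne).1, ν, (hν hνne).1, S, hS,
        Set.subset_inter (hμ hμne).2 (hν hνne).2, ?_⟩))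
      unfold Melt
      rw [RMul_of_ne hνne, LMul_of_ne hμne, mul_assoc]

lemma exists_Q_of_mem_genU {x : B} (hx : x ∈ genU G C p s) :
    ∃ μ S ν, Q G C μ S ν ∧ x = Melt p s μ S ν := by
  simp only [genU, Set.mem_union, Set.mem_setOf_eq] at hx
  rcases hx with (((⟨α, hα, β, hβ, S, hS, hsub, rfl⟩ | ⟨α, hα, S, hS, hsub, rfl⟩) |
    ⟨β, hβ, S, hS, hsub, rfl⟩) | ⟨S, hS, rfl⟩)
  · refine ⟨α, S, β, ⟨hS, fun _ => ⟨hα, fun v hv => (hsub hv).1⟩,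
      fun _ => ⟨hβ, fun v hv => (hsub hv).2⟩⟩, ?_⟩
    unfold Melt
    rw [RMul_of_ne (lang_ne_nil hβ), LMul_of_ne (lang_ne_nil hα), mul_assoc]
  · exact ⟨α, S, [], ⟨hS, fun _ => ⟨hα, hsub⟩, fun h => absurd rfl h⟩,
      (LMul_of_ne (lang_ne_nil hα) (p S)).symm⟩
  · exact ⟨[], S, β, ⟨hS, fun h => absurd rfl h, fun _ => ⟨hβ, hsub⟩⟩,
      (RMul_of_ne (lang_ne_nil hβ) (p S)).symm⟩
  · exact ⟨[], S, [], ⟨hS, fun h => absurd rfl h, fun h => absurd rfl h⟩, rfl⟩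

variable (hC : G.Accommodating C) (hrep : G.IsRepresentation C p s)
include hC hrep

lemma p_mul_sWord : ∀ {γ : List A}, γ ∈ G.language → ∀ {S : Set V}, S ∈ C →
    p S * sWord s γ = sWord s γ * p (G.relRng S γ) := by
  intro γ
  induction γ with
  | nil => intro h; exact absurd rfl (lang_ne_nil h)
  | cons a γ' ih =>
    intro hγ S hS
    rcases eq_or_ne γ' [] with rfl | hne
    · exact hrep.p_mul_s S hS a hγ
    · have ha : [a] ∈ G.language := letter_lang hγ List.mem_cons_self
      have hγ' : γ' ∈ G.language := suffix_lang (show [a] ++ γ' ∈ G.language by simpa) hne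
      have hrel : G.relRng S [a] ∈ C := hC.relRng_mem S hS [a] ha
      rw [sWord_cons' s a hne, ← mul_assoc, hrep.p_mul_s S hS a ha, mul_assoc,
        ih hγ' hrel, ← mul_assoc, ← sWord_cons' s a hne]
      congr 2
      exact (relRng_append S (by simp) hne).symm

lemma star_sWord_mul_self : ∀ {γ : List A}, γ ∈ G.language →
    star (sWord s γ) * sWord s γ = p (G.rngSet γ) := by
  intro γ
  induction γ with
  | nil => intro h; exact absurd rfl (lang_ne_nil h)
  | cons a γ' ih =>
    intro hγ
    rcases eq_or_ne γ' [] with rfl | hne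
    · exact hrep.star_s_mul_s a hγ
    · have ha : [a] ∈ G.language := letter_lang hγ List.mem_cons_self
      have hγ' : γ' ∈ G.language := suffix_lang (show [a] ++ γ' ∈ G.language by simpa) hne
      have hra : G.rngSet [a] ∈ C := hC.rng_mem [a] ha
      rw [sWord_cons' s a hne, star_mul, mul_assoc, ← mul_assoc (star (s a)) (s a),
        hrep.star_s_mul_s a ha, p_mul_sWord hC hrep hγ' hra, ← mul_assoc, ih hγ',
        hrep.p_inter _ (hC.rng_mem γ' hγ') _ (hC.relRng_mem _ hra γ' hγ')]
      congr 1
      rw [Set.inter_eq_right.mpr (relRng_subset_rngSet _ _)]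
      exact (rngSet_append (G := G) (by simp) hne).symm

omit hC in
lemma star_s_mul_sWord_zero {a b : A} (h0 : star (s a) * s b = 0) (γ' : List A) :
    star (s a) * sWord s (b :: γ') = 0 := by
  rcases eq_or_ne γ' [] with rfl | hne
  · exact h0
  · rw [sWord_cons' s b hne, ← mul_assoc, h0, zero_mul]

lemma star_sWord_orth : ∀ {ν : List A}, ν ∈ G.language → ∀ {γ : List A},
    γ ∈ G.language → ¬ ν <+: γ → ¬ γ <+: ν →
    star (sWord s ν) * sWord s γ = 0 := by
  intro ν
  induction ν with
  | nil => intro h; exact absurd rfl (lang_ne_nil h)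
  | cons a ν' ih =>
    intro hν γ hγ h1 h2
    obtain ⟨b, γ', rfl⟩ : ∃ b γ', γ = b :: γ' := by
      cases γ with
      | nil => exact absurd rfl (lang_ne_nil hγ)
      | cons b γ' => exact ⟨b, γ', rfl⟩
    have ha : [a] ∈ G.language := letter_lang hν List.mem_cons_self
    have hb : [b] ∈ G.language := letter_lang hγ List.mem_cons_self
    by_cases hab : a = b
    · subst hab
      have hν'ne : ν' ≠ [] := by rintro rfl; exact h1 ⟨γ', rfl⟩
      have hγ'ne : γ' ≠ [] := by rintro rfl; exact h2 ⟨ν', rfl⟩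
      have hν' : ν' ∈ G.language := suffix_lang (show [a] ++ ν' ∈ G.language by simpa) hν'ne
      have hγ' : γ' ∈ G.language := suffix_lang (show [a] ++ γ' ∈ G.language by simpa) hγ'ne
      have h1' : ¬ ν' <+: γ' := fun hp => h1 (by
        obtain ⟨t, ht⟩ := hp; exact ⟨t, by rw [List.cons_append, ht]⟩)
      have h2' : ¬ γ' <+: ν' := fun hp => h2 (by
        obtain ⟨t, ht⟩ := hp; exact ⟨t, by rw [List.cons_append, ht]⟩)
      rw [sWord_cons' s a hν'ne, sWord_cons' s a hγ'ne, star_mul, mul_assoc,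
        ← mul_assoc (star (s a)), hrep.star_s_mul_s a ha,
        p_mul_sWord hC hrep hγ' (hC.rng_mem [a] ha), ← mul_assoc,
        ih hν' hγ' h1' h2', zero_mul]
    · have h0 : star (s a) * s b = 0 := hrep.s_orth a b ha hb hab
      rcases eq_or_ne ν' [] with rfl | hν'ne
      · exact star_s_mul_sWord_zero hrep h0 γ'
      · rw [sWord_cons' s a hν'ne, star_mul, mul_assoc,
          star_s_mul_sWord_zero hrep h0 γ', mul_zero]

lemma mid_same {S T : Set V} (hS : S ∈ C) (hT : T ∈ C) {ν : List A}
    (hν : ν ≠ [] → ν ∈ G.language ∧ S ⊆ G.rngSet ν) :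
    RMul s ν (p S) * LMul s ν (p T) = p (S ∩ T) := by
  rcases eq_or_ne ν [] with rfl | hne
  · exact hrep.p_inter S hS T hT
  · obtain ⟨hl, hsub⟩ := hν hne
    have hrC : G.rngSet ν ∈ C := hC.rng_mem ν hl
    rw [RMul_of_ne hne, LMul_of_ne hne]
    simp only [mul_assoc]
    rw [← mul_assoc (star (sWord s ν)) (sWord s ν), star_sWord_mul_self hC hrep hl,
      hrep.p_inter _ hrC T hT, hrep.p_inter S hS _ (hC.inter_mem _ hrC _ hT),
      ← Set.inter_assoc, Set.inter_eq_left.mpr hsub]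

lemma mid_ext {S T : Set V} (hS : S ∈ C) (hT : T ∈ C) {ν γ' : List A}
    (hν : ν ≠ [] → ν ∈ G.language ∧ S ⊆ G.rngSet ν) (hγ' : γ' ∈ G.language) :
    RMul s ν (p S) * LMul s (ν ++ γ') (p T) =
      sWord s γ' * p (G.relRng S γ' ∩ T) := by
  have hγ'ne : γ' ≠ [] := lang_ne_nil hγ'
  rcases eq_or_ne ν [] with rfl | hne
  · show p S * LMul s γ' (p T) = _
    rw [LMul_of_ne hγ'ne, ← mul_assoc, p_mul_sWord hC hrep hγ' hS, mul_assoc,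
      hrep.p_inter _ (hC.relRng_mem S hS γ' hγ') T hT]
  · obtain ⟨hl, hsub⟩ := hν hne
    have hrC : G.rngSet ν ∈ C := hC.rng_mem ν hl
    rw [RMul_of_ne hne, LMul_of_ne (show ν ++ γ' ≠ [] by simp [hne]),
      sWord_append' s hne hγ'ne]
    simp only [mul_assoc]
    rw [← mul_assoc (star (sWord s ν)) (sWord s ν), star_sWord_mul_self hC hrep hl,
      ← mul_assoc, ← mul_assoc, hrep.p_inter S hS _ hrC, Set.inter_eq_left.mpr hsub,
      mul_assoc, ← mul_assoc, p_mul_sWord hC hrep hγ' hS, mul_assoc,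
      hrep.p_inter _ (hC.relRng_mem S hS γ' hγ') T hT]

omit hC in
lemma star_LMul_p {S : Set V} (hS : S ∈ C) (μ : List A) :
    star (LMul s μ (p S)) = RMul s μ (p S) := by
  cases μ with
  | nil => exact hrep.p_star S hS
  | cons a t =>
    rw [LMul_of_ne (by simp), RMul_of_ne (by simp), star_mul, hrep.p_star S hS]

omit hC in
lemma star_RMul_p {S : Set V} (hS : S ∈ C) (μ : List A) :
    star (RMul s μ (p S)) = LMul s μ (p S) := by
  cases μ with
  | nil => exact hrep.p_star S hS
  | cons a t =>
    rw [RMul_of_ne (by simp), LMul_of_ne (by simp), star_mul, star_star,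
      hrep.p_star S hS]

lemma mid_coext {S T : Set V} (hS : S ∈ C) (hT : T ∈ C) {γ ν' : List A}
    (hγ : γ ≠ [] → γ ∈ G.language ∧ T ⊆ G.rngSet γ) (hν' : ν' ∈ G.language) :
    RMul s (γ ++ ν') (p S) * LMul s γ (p T) =
      p (G.relRng T ν' ∩ S) * star (sWord s ν') := by
  have hRC : G.relRng T ν' ∩ S ∈ C :=
    hC.inter_mem _ (hC.relRng_mem T hT ν' hν') S hS
  have key := mid_ext hC hrep hT hS hγ hν'
  have h1 : star (RMul s γ (p T) * LMul s (γ ++ ν') (p S)) =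
      RMul s (γ ++ ν') (p S) * LMul s γ (p T) := by
    rw [star_mul, star_LMul_p hrep hS, star_RMul_p hrep hT]
  rw [← h1, key, star_mul, hrep.p_star _ hRC]

lemma mid_orth {S T : Set V} {ν γ : List A} (hνl : ν ∈ G.language)
    (hγl : γ ∈ G.language) (h1 : ¬ ν <+: γ) (h2 : ¬ γ <+: ν) :
    RMul s ν (p S) * LMul s γ (p T) = 0 := by
  rw [RMul_of_ne (lang_ne_nil hνl), LMul_of_ne (lang_ne_nil hγl)]
  simp only [mul_assoc]
  rw [← mul_assoc (star (sWord s ν)) (sWord s γ),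
    star_sWord_orth hC hrep hνl hγl h1 h2, zero_mul, mul_zero]

lemma melt_mul {μ : List A} {S : Set V} {ν γ : List A} {T : Set V} {δ : List A}
    (h1 : Q G C μ S ν) (h2 : Q G C γ T δ) :
    Melt p s μ S ν * Melt p s γ T δ = 0 ∨
      ∃ μ' S' ν', Q G C μ' S' ν' ∧
        Melt p s μ S ν * Melt p s γ T δ = Melt p s μ' S' ν' := by
  obtain ⟨hS, hμ, hν⟩ := h1
  obtain ⟨hT, hγ, hδ⟩ := h2
  have base : Melt p s μ S ν * Melt p s γ T δ
      = LMul s μ (RMul s δ (RMul s ν (p S) * LMul s γ (p T))) := by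
    unfold Melt
    rw [LMul_RMul γ δ (p T), LMul_mul_RMul]
  by_cases hpre : ν <+: γ
  · obtain ⟨γ', rfl⟩ := hpre
    rcases eq_or_ne γ' [] with rfl | hγ'ne
    · right
      refine ⟨μ, S ∩ T, δ, ⟨hC.inter_mem S hS T hT,
        fun h => ⟨(hμ h).1, Set.inter_subset_left.trans (hμ h).2⟩,
        fun h => ⟨(hδ h).1, Set.inter_subset_right.trans (hδ h).2⟩⟩, ?_⟩
      simp only [List.append_nil] at base ⊢
      rw [base, mid_same hC hrep hS hT hν]
      rfl
    · have hγlang : ν ++ γ' ∈ G.language := (hγ (by simp [hγ'ne])).1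
      have hγ'l : γ' ∈ G.language := suffix_lang hγlang hγ'ne
      have hRC : G.relRng S γ' ∩ T ∈ C :=
        hC.inter_mem _ (hC.relRng_mem S hS γ' hγ'l) T hT
      have hmid := mid_ext hC hrep hS hT hν hγ'l
      rcases eq_or_ne μ [] with rfl | hμne
      · right
        refine ⟨γ', G.relRng S γ' ∩ T, δ, ⟨hRC,
          fun _ => ⟨hγ'l, Set.inter_subset_left.trans (relRng_subset_rngSet S γ')⟩,
          fun h => ⟨(hδ h).1, Set.inter_subset_right.trans (hδ h).2⟩⟩, ?_⟩
        rw [base, hmid]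
        show RMul s δ (sWord s γ' * p (G.relRng S γ' ∩ T)) = Melt p s γ' _ δ
        unfold Melt
        rw [LMul_RMul]
        congr 1
        exact (LMul_of_ne hγ'ne _).symm
      · by_cases hl : μ ++ γ' ∈ G.language
        · right
          refine ⟨μ ++ γ', G.relRng S γ' ∩ T, δ, ⟨hRC, fun _ => ⟨hl, ?_⟩,
            fun h => ⟨(hδ h).1, Set.inter_subset_right.trans (hδ h).2⟩⟩, ?_⟩
          · refine Set.inter_subset_left.trans ?_
            rw [rngSet_append hμne hγ'ne]
            exact relRng_mono (hμ hμne).2 γ'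
          · rw [base, hmid]
            rcases eq_or_ne δ [] with rfl | hδne
            · show LMul s μ (sWord s γ' * p (G.relRng S γ' ∩ T)) =
                LMul s (μ ++ γ') (p (G.relRng S γ' ∩ T))
              rw [LMul_of_ne hμne, LMul_of_ne (show μ ++ γ' ≠ [] by simp [hμne]),
                sWord_append' s hμne hγ'ne, mul_assoc]
            · show LMul s μ (RMul s δ (sWord s γ' * p (G.relRng S γ' ∩ T))) =
                LMul s (μ ++ γ') (RMul s δ (p (G.relRng S γ' ∩ T)))
              rw [RMul_of_ne hδne, RMul_of_ne hδne, LMul_of_ne hμne,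
                LMul_of_ne (show μ ++ γ' ≠ [] by simp [hμne]),
                sWord_append' s hμne hγ'ne]
              simp only [mul_assoc]
        · left
          have hsubE : G.relRng S γ' ⊆ G.rngSet (μ ++ γ') := by
            rw [rngSet_append hμne hγ'ne]
            exact relRng_mono (hμ hμne).2 γ'
          rw [rngSet_of_not_lang hl] at hsubE
          have hR : G.relRng S γ' ∩ T = ∅ :=
            Set.subset_empty_iff.mp (Set.inter_subset_left.trans hsubE)
          rw [base, hmid, hR, hrep.p_empty, mul_zero, RMul_zero, LMul_zero]
  · by_cases hpre2 : γ <+: ν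
    · obtain ⟨ν', rfl⟩ := hpre2
      have hν'ne : ν' ≠ [] := by rintro rfl; exact hpre (by simp)
      have hνlang : γ ++ ν' ∈ G.language := (hν (by simp [hν'ne])).1
      have hν'l : ν' ∈ G.language := suffix_lang hνlang hν'ne
      have hRC : G.relRng T ν' ∩ S ∈ C :=
        hC.inter_mem _ (hC.relRng_mem T hT ν' hν'l) S hS
      have hmid := mid_coext hC hrep hS hT hγ hν'l
      rcases eq_or_ne δ [] with rfl | hδne
      · right
        refine ⟨μ, G.relRng T ν' ∩ S, ν', ⟨hRC,
          fun h => ⟨(hμ h).1, Set.inter_subset_right.trans (hμ h).2⟩,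
          fun _ => ⟨hν'l, Set.inter_subset_left.trans (relRng_subset_rngSet T ν')⟩⟩, ?_⟩
        rw [base, hmid]
        unfold Melt
        congr 1
        exact (RMul_of_ne hν'ne _).symm
      · by_cases hl : δ ++ ν' ∈ G.language
        · right
          refine ⟨μ, G.relRng T ν' ∩ S, δ ++ ν', ⟨hRC,
            fun h => ⟨(hμ h).1, Set.inter_subset_right.trans (hμ h).2⟩,
            fun _ => ⟨hl, ?_⟩⟩, ?_⟩
          · refine Set.inter_subset_left.trans ?_
            rw [rngSet_append hδne hν'ne]
            exact relRng_mono (hδ hδne).2 ν'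
          · rw [base, hmid]
            unfold Melt
            congr 1
            rw [RMul_of_ne hδne, RMul_of_ne (show δ ++ ν' ≠ [] by simp [hδne]),
              sWord_append' s hδne hν'ne, star_mul, mul_assoc]
        · left
          have hsubE : G.relRng T ν' ⊆ G.rngSet (δ ++ ν') := by
            rw [rngSet_append hδne hν'ne]
            exact relRng_mono (hδ hδne).2 ν'
          rw [rngSet_of_not_lang hl] at hsubE
          have hR : G.relRng T ν' ∩ S = ∅ :=
            Set.subset_empty_iff.mp (Set.inter_subset_left.trans hsubE)
          rw [base, hmid, hR, hrep.p_empty, zero_mul, RMul_zero, LMul_zero]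
    · have hνne : ν ≠ [] := by rintro rfl; exact hpre (List.nil_prefix)
      have hγne : γ ≠ [] := by rintro rfl; exact hpre2 (List.nil_prefix)
      left
      rw [base, mid_orth hC hrep (hν hνne).1 (hγ hγne).1 hpre hpre2,
        RMul_zero, LMul_zero]

omit hC in
lemma star_LMul (μ : List A) (x : B) :
    star (LMul s μ x) = RMul s μ (star x) := by
  cases μ with
  | nil => rfl
  | cons a t => rw [LMul_of_ne (by simp), RMul_of_ne (by simp), star_mul]

omit hC in
lemma star_Melt {μ : List A} {S : Set V} {ν : List A} (hS : S ∈ C) :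
    star (Melt p s μ S ν) = Melt p s ν S μ := by
  unfold Melt
  rw [star_LMul hrep, star_RMul_p hrep hS, LMul_RMul]

end RepAux

end RepAux

theorem rep_span_dense {V E A : Type*} [Countable V] [Countable E]
    {B : Type*} [NonUnitalCStarAlgebra B]
    (G : LabelledGraph V E A) (C : Set (Set V))
    (hC : G.Accommodating C) (hwlr : G.WeaklyLeftResolving C)
    (p : Set V → B) (s : A → B) (hrep : G.IsRepresentation C p s) :
    let W : Submodule ℂ B := Submodule.span ℂ
      ({ x | ∃ α ∈ G.language, ∃ β ∈ G.language, ∃ S ∈ C,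
          S ⊆ G.rngSet α ∩ G.rngSet β ∧ x = sWord s α * p S * star (sWord s β) } ∪
       { x | ∃ α ∈ G.language, ∃ S ∈ C,
          S ⊆ G.rngSet α ∧ x = sWord s α * p S } ∪
       { x | ∃ β ∈ G.language, ∃ S ∈ C,
          S ⊆ G.rngSet β ∧ x = p S * star (sWord s β) } ∪
       { x | ∃ S ∈ C, x = p S })
    (∀ x ∈ W, star x ∈ W) ∧
    (∀ x ∈ W, ∀ y ∈ W, x * y ∈ W) ∧
    (∀ a, [a] ∈ G.language → s a ∈ W) ∧
    (∀ S ∈ C, p S ∈ W) ∧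
    (∀ l : List B, l ≠ [] →
      (∀ x ∈ l, x ∈ ({ x | ∃ a, [a] ∈ G.language ∧ x = s a } ∪
                      { x | ∃ a, [a] ∈ G.language ∧ x = star (s a) } ∪
                      { x | ∃ S ∈ C, x = p S } : Set B)) →
      sWord (fun x : B => x) l ∈ W) ∧
    closure (W : Set B) =
      genCStar B ({ x | ∃ a, [a] ∈ G.language ∧ x = s a } ∪ { x | ∃ S ∈ C, x = p S }) := by
  intro W
  have hW : W = Submodule.span ℂ (RepAux.genU G C p s) := rfl
  have hstar : ∀ x ∈ W, star x ∈ W := by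
    intro x hx
    rw [hW] at hx ⊢
    induction hx using Submodule.span_induction with
    | mem y hy =>
      obtain ⟨μ, S, ν, hQ, rfl⟩ := RepAux.exists_Q_of_mem_genU hy
      rw [RepAux.star_Melt hrep hQ.1]
      exact Submodule.subset_span (RepAux.mem_genU_of_Q ⟨hQ.1, hQ.2.2, hQ.2.1⟩)
    | zero => simpa using Submodule.zero_mem _
    | add a b _ _ ha hb => rw [star_add]; exact Submodule.add_mem _ ha hb
    | smul c y _ hy => rw [star_smul]; exact Submodule.smul_mem _ _ hy
  have hmul : ∀ x ∈ W, ∀ y ∈ W, x * y ∈ W := by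
    have hgen : ∀ x ∈ RepAux.genU G C p s, ∀ y ∈ W, x * y ∈ W := by
      intro x hx y hy
      rw [hW] at hy ⊢
      induction hy using Submodule.span_induction with
      | mem z hz =>
        obtain ⟨μ, S, ν, hQ1, rfl⟩ := RepAux.exists_Q_of_mem_genU hx
        obtain ⟨γ, T, δ, hQ2, rfl⟩ := RepAux.exists_Q_of_mem_genU hz
        rcases RepAux.melt_mul hC hrep hQ1 hQ2 with h0 | ⟨μ', S', ν', hQ', heq⟩
        · rw [h0]; exact Submodule.zero_mem _
        · rw [heq]; exact Submodule.subset_span (RepAux.mem_genU_of_Q hQ')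
      | zero => rw [mul_zero]; exact Submodule.zero_mem _
      | add a b _ _ ha hb => rw [mul_add]; exact Submodule.add_mem _ ha hb
      | smul c z _ hz => rw [mul_smul_comm]; exact Submodule.smul_mem _ _ hz
    intro x hx y hy
    rw [hW] at hx
    induction hx using Submodule.span_induction with
    | mem z hz => exact hgen z hz y hy
    | zero => rw [zero_mul]; exact Submodule.zero_mem _
    | add a b _ _ ha hb => rw [add_mul]; exact Submodule.add_mem _ ha hb
    | smul c z _ hz => rw [smul_mul_assoc]; exact Submodule.smul_mem _ _ hz
  have hsa : ∀ a, [a] ∈ G.language → s a ∈ W := by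
    intro a ha
    have h1 : s a * p (G.rngSet [a]) = s a := by
      rw [← hrep.star_s_mul_s a ha, ← mul_assoc, hrep.s_partialIsometry a ha]
    have h2 : RepAux.Melt p s [a] (G.rngSet [a]) [] = s a := by
      show RepAux.LMul s [a] (p (G.rngSet [a])) = s a
      rw [RepAux.LMul_of_ne (by simp)]
      exact h1
    rw [hW, ← h2]
    exact Submodule.subset_span (RepAux.mem_genU_of_Q
      ⟨hC.rng_mem [a] ha, fun _ => ⟨ha, subset_rfl⟩, fun h => absurd rfl h⟩)
  have hpS : ∀ S ∈ C, p S ∈ W := by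
    intro S hS
    rw [hW]
    exact Submodule.subset_span (RepAux.mem_genU_of_Q
      (⟨hS, fun h => absurd rfl h, fun h => absurd rfl h⟩ : RepAux.Q G C [] S []))
  have hprod : ∀ l : List B, l ≠ [] →
      (∀ x ∈ l, x ∈ ({ x | ∃ a, [a] ∈ G.language ∧ x = s a } ∪
                      { x | ∃ a, [a] ∈ G.language ∧ x = star (s a) } ∪
                      { x | ∃ S ∈ C, x = p S } : Set B)) →
      sWord (fun x : B => x) l ∈ W := by
    intro l
    induction l with
    | nil => intro h; exact absurd rfl h
    | cons x t ih =>
      intro _ hmem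
      have hx : x ∈ W := by
        rcases hmem x List.mem_cons_self with
          ((⟨a, ha, rfl⟩ | ⟨a, ha, rfl⟩) | ⟨S, hS, rfl⟩)
        · exact hsa a ha
        · exact hstar _ (hsa a ha)
        · exact hpS S hS
      rcases eq_or_ne t [] with rfl | htne
      · exact hx
      · rw [sWord_cons' _ x htne]
        exact hmul x hx _ (ih htne fun z hz => hmem z (List.mem_cons_of_mem x hz))
  refine ⟨hstar, hmul, hsa, hpS, hprod, ?_⟩
  have hadj : (NonUnitalStarAlgebra.adjoin ℂ
      ({ x | ∃ a, [a] ∈ G.language ∧ x = s a } ∪ { x | ∃ S ∈ C, x = p S }) : Set B)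
      = (W : Set B) := by
    apply subset_antisymm
    · intro x hx
      simp only [SetLike.mem_coe] at hx
      refine NonUnitalStarAlgebra.adjoin_induction ℂ (p := fun x _ => x ∈ W)
        ?_ ?_ ?_ ?_ ?_ ?_ hx
      · rintro y (⟨a, ha, rfl⟩ | ⟨S, hS, rfl⟩)
        · exact hsa a ha
        · exact hpS S hS
      · intro y z _ _ hy hz; exact Submodule.add_mem _ hy hz
      · exact Submodule.zero_mem _
      · intro y z _ _ hy hz; exact hmul y hy z hz
      · intro c y _ hy; exact Submodule.smul_mem _ _ hy
      · intro y _ hy; exact hstar y hy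
    · intro x hx
      rw [hW] at hx
      simp only [SetLike.mem_coe]
      have hword : ∀ μ, μ ∈ G.language → sWord s μ ∈ NonUnitalStarAlgebra.adjoin ℂ
          ({ x | ∃ a, [a] ∈ G.language ∧ x = s a } ∪ { x | ∃ S ∈ C, x = p S }) := by
        intro μ
        induction μ with
        | nil => intro h; exact absurd rfl (LabelledGraph.lang_ne_nil h)
        | cons a t ihw =>
          intro h
          have ha : s a ∈ NonUnitalStarAlgebra.adjoin ℂ
              ({ x | ∃ a, [a] ∈ G.language ∧ x = s a } ∪ { x | ∃ S ∈ C, x = p S }) :=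
            NonUnitalStarAlgebra.subset_adjoin ℂ _
              (Or.inl ⟨a, LabelledGraph.letter_lang h List.mem_cons_self, rfl⟩)
          rcases eq_or_ne t [] with rfl | htne
          · exact ha
          · rw [sWord_cons' s a htne]
            exact mul_mem ha (ihw (LabelledGraph.suffix_lang
              (show [a] ++ t ∈ G.language by simpa) htne))
      have hpadj : ∀ S ∈ C, p S ∈ NonUnitalStarAlgebra.adjoin ℂ
          ({ x | ∃ a, [a] ∈ G.language ∧ x = s a } ∪ { x | ∃ S ∈ C, x = p S }) :=
        fun S hS => NonUnitalStarAlgebra.subset_adjoin ℂ _ (Or.inr ⟨S, hS, rfl⟩)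
      induction hx using Submodule.span_induction with
      | mem z hz =>
        obtain ⟨μ, S, ν, hQ, rfl⟩ := RepAux.exists_Q_of_mem_genU hz
        rcases eq_or_ne μ [] with rfl | hμne
        · rcases eq_or_ne ν [] with rfl | hνne
          · exact hpadj S hQ.1
          · rw [show RepAux.Melt p s [] S ν = p S * star (sWord s ν) from
              RepAux.RMul_of_ne hνne (p S)]
            exact mul_mem (hpadj S hQ.1) (star_mem (hword ν (hQ.2.2 hνne).1))
        · rcases eq_or_ne ν [] with rfl | hνne
          · rw [show RepAux.Melt p s μ S [] = sWord s μ * p S from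
              RepAux.LMul_of_ne hμne (p S)]
            exact mul_mem (hword μ (hQ.2.1 hμne).1) (hpadj S hQ.1)
          · rw [show RepAux.Melt p s μ S ν = sWord s μ * (p S * star (sWord s ν)) from by
              unfold RepAux.Melt
              rw [RepAux.RMul_of_ne hνne, RepAux.LMul_of_ne hμne]]
            exact mul_mem (hword μ (hQ.2.1 hμne).1)
              (mul_mem (hpadj S hQ.1) (star_mem (hword ν (hQ.2.2 hνne).1)))
      | zero => exact zero_mem _
      | add a b _ _ ha hb => exact add_mem ha hb
      | smul c z _ hz => exact SMulMemClass.smul_mem c hz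
  show closure (W : Set B) = closure ((NonUnitalStarAlgebra.adjoin ℂ
      ({ x | ∃ a, [a] ∈ G.language ∧ x = s a } ∪ { x | ∃ S ∈ C, x = p S }) : Set B))
  exact (congrArg closure hadj).symm
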